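/- Assume the abstract reduced crossed product setup for an action α : Γ → Aut(A) with (SAveP), with ambient C*-algebra B, unitaries (u_t), and conditional expectation E : B → A, and assume in addition that E is faithful: for x ∈ B, E(x* x) = 0 implies x = 0. Let Λ be a subgroup of Γ such that the restricted action of Λ on A is minimal, i.e., the only closed two-sided ideals I of A satisfying α_s(I) ⊆ I for all s ∈ Λ are {0} and A. Let D be any norm-closed *-subalgebra of B containing A and {u_t : t ∈ Λ}. Then D is simple: every closed two-sided ideal of D is {0} or D. (In particular, the inclusion A ⋊_r Λ ⊆ A ⋊_r Γ is C*-irreducible.) -/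

import Mathlib

/-- For a unital C*-subalgebra `A` of `B`, a map `f` on `A`, and `b ∈ B`, the norm-closed
convex hull in `B` of `{v * b * star (f v) : v a unitary element of A}`.  For `f = id`
this is `C_A(b)`; for `f = β` an automorphism of `A` it is `C_A^β(b)`. -/
def relC {B : Type*} [NormedRing B] [StarRing B] [CStarRing B] [NormedAlgebra ℂ B]
    [CompleteSpace B] [StarModule ℂ B]
    (A : StarSubalgebra ℂ B) (f : ↥A → ↥A) (b : B) : Set B :=
  closure (convexHull ℝ
    {y : B | ∃ v : ↥A, v ∈ unitary ↥A ∧ y = (v : B) * b * star ((f v : ↥A) : B)})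

/-!
Averaging by convex combinations of the inner automorphisms `x ↦ v x v*`, `v` a unitary of `A`,
commutes with the `A`-bimodular expectation `E`, and by (SAveP) it pushes every `a u_t` with
`t ≠ 1` to norm zero while keeping it in `A u_t`. As these elements span a dense subspace, every
`x ∈ B` has an average `y` with `‖y - E y‖` as small as we like. For a nonzero ideal `J` of `D`,
faithfulness of `E` makes the closure of `E(J)` a nonzero closed `Λ`-invariant ideal of `A`,
hence all of `A` by minimality, so some `z ∈ J` has `‖E z - 1‖ < 1/2`. An average `y` of `z`
with `‖y - E y‖ < 1/2` lies in `J`, as `A ⊆ D`, and satisfies `‖y - 1‖ < 1`; so `y` is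
invertible and `J = D`.
-/

open Set
open scoped Pointwise

theorem convexHull_mul_subset {𝕜 R : Type*} [CommRing 𝕜] [PartialOrder 𝕜] [Ring R]
    [Algebra 𝕜 R] (s t : Set R) : convexHull 𝕜 s * convexHull 𝕜 t ⊆ convexHull 𝕜 (s * t) := by
  rintro _ ⟨a, ha, b, hb, rfl⟩
  have hsb : s ⊆ (· * b) ⁻¹' convexHull 𝕜 (s * t) := fun a' ha' =>
    convexHull_min (t := (a' * ·) ⁻¹' convexHull 𝕜 (s * t))
      (fun b' hb' => subset_convexHull 𝕜 _ (mul_mem_mul ha' hb'))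
      ((convex_convexHull 𝕜 _).linear_preimage (LinearMap.mulLeft 𝕜 a')) hb
  exact convexHull_min hsb ((convex_convexHull 𝕜 _).linear_preimage (LinearMap.mulRight 𝕜 b)) ha

namespace TwoSidedIdeal

theorem convex {𝕜 R : Type*} [CommRing 𝕜] [PartialOrder 𝕜] [Ring R] [Algebra 𝕜 R]
    (I : TwoSidedIdeal R) : Convex 𝕜 (I : Set R) := fun _ hx _ hy a b _ _ _ => by
  rw [Algebra.smul_def, Algebra.smul_def]
  exact I.add_mem (I.mul_mem_left _ _ hx) (I.mul_mem_left _ _ hy)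

theorem eq_top_of_norm_one_sub_lt_one {R : Type*} [NormedRing R] [HasSummableGeomSeries R]
    (I : TwoSidedIdeal R) {x : R} (hx : x ∈ I) (h : ‖1 - x‖ < 1) : I = ⊤ := by
  obtain ⟨w, hw⟩ := sub_sub_cancel (1 : R) x ▸ isUnit_one_sub_of_norm_lt_one h
  rw [← I.one_mem_iff, ← w.inv_mul, hw]
  exact I.mul_mem_left _ _ hx

section TopologicalClosure

variable {R : Type*} [Ring R] [TopologicalSpace R] [IsTopologicalRing R] (I : TwoSidedIdeal R)

def topologicalClosure : TwoSidedIdeal R :=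
  .mk' (closure I) (subset_closure I.zero_mem)
    (fun hx hy => map_mem_closure₂ continuous_add hx hy fun _ ha _ hb => I.add_mem ha hb)
    (fun hx => map_mem_closure continuous_neg hx fun _ ha => I.neg_mem ha)
    (fun hy => map_mem_closure (continuous_const_mul _) hy fun _ ha => I.mul_mem_left _ _ ha)
    (fun hx => map_mem_closure (f := (· * _)) (continuous_mul_const _) hx
      fun _ ha => I.mul_mem_right _ _ ha)

@[simp]
theorem coe_topologicalClosure : (I.topologicalClosure : Set R) = closure I :=
  coe_mk' _ _ _ _ _ _

theorem isClosed_topologicalClosure : IsClosed (I.topologicalClosure : Set R) :=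
  I.coe_topologicalClosure ▸ isClosed_closure

theorem le_topologicalClosure : I ≤ I.topologicalClosure := fun _ hx => by
  rw [← SetLike.mem_coe, coe_topologicalClosure]
  exact subset_closure hx

end TopologicalClosure

end TwoSidedIdeal

section Averaging

variable {𝕜 X : Type*} [NontriviallyNormedField 𝕜] [NormedAddCommGroup X] [NormedSpace 𝕜 X]
  {M : Submonoid (X →L[𝕜] X)} {Q : X →L[𝕜] X}

/-- Quantifying over `ψ` makes this property additive: average the first summand, then the
resulting image of the second one. -/
def AveragesToKer (M : Submonoid (X →L[𝕜] X)) (Q : X →L[𝕜] X) (y : X) : Prop :=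
  ∀ ψ ∈ M, ∀ ε > 0, ∃ φ ∈ M, ‖Q (φ (ψ y))‖ < ε

theorem norm_apply_apply_le_of_commute {φ : X →L[𝕜] X} (hφ : ‖φ‖ ≤ 1) (hQ : Commute Q φ)
    (z : X) : ‖Q (φ z)‖ ≤ ‖Q z‖ :=
  calc ‖Q (φ z)‖ = ‖φ (Q z)‖ := by rw [← mul_apply_eq_comp, hQ.eq, mul_apply_eq_comp]
    _ ≤ ‖φ‖ * ‖Q z‖ := φ.le_opNorm _
    _ ≤ ‖Q z‖ := mul_le_of_le_one_left (norm_nonneg _) hφ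

theorem averagesToKer_zero : AveragesToKer M Q 0 :=
  fun _ _ _ hε => ⟨1, M.one_mem, by simpa using hε⟩

theorem AveragesToKer.add (hM : ∀ φ ∈ M, ‖φ‖ ≤ 1) (hQ : ∀ φ ∈ M, Commute Q φ) {x y : X}
    (hx : AveragesToKer M Q x) (hy : AveragesToKer M Q y) : AveragesToKer M Q (x + y) := by
  intro ψ hψ ε hε
  obtain ⟨φ₁, hφ₁, hx⟩ := hx ψ hψ (ε / 2) (half_pos hε)
  obtain ⟨φ₂, hφ₂, hy⟩ := hy (φ₁ * ψ) (M.mul_mem hφ₁ hψ) (ε / 2) (half_pos hε)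
  refine ⟨φ₂ * φ₁, M.mul_mem hφ₂ hφ₁, ?_⟩
  calc ‖Q ((φ₂ * φ₁) (ψ (x + y)))‖
      ≤ ‖Q (φ₂ (φ₁ (ψ x)))‖ + ‖Q (φ₂ ((φ₁ * ψ) y))‖ := by
        simpa only [map_add, mul_apply_eq_comp] using norm_add_le _ _
    _ < ε / 2 + ε / 2 :=
        add_lt_add_of_le_of_lt
          ((norm_apply_apply_le_of_commute (hM _ hφ₂) (hQ _ hφ₂) _).trans_lt hx).le hy
    _ = ε := add_halves ε

theorem AveragesToKer.smul {y : X} (c : 𝕜) (hy : AveragesToKer M Q y) :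
    AveragesToKer M Q (c • y) := by
  intro ψ hψ ε hε
  obtain ⟨δ, hδ, hcδ⟩ := exists_pos_mul_lt hε ‖c‖
  obtain ⟨φ, hφ, hy⟩ := hy ψ hψ δ hδ
  refine ⟨φ, hφ, ?_⟩
  rw [map_smul, map_smul, map_smul, norm_smul]
  exact (mul_le_mul_of_nonneg_left hy.le (norm_nonneg c)).trans_lt hcδ

theorem isClosed_setOf_averagesToKer (hM : ∀ φ ∈ M, ‖φ‖ ≤ 1) :
    IsClosed {y | AveragesToKer M Q y} := by
  refine isClosed_iff_clusterPt.mpr fun y hy ψ hψ ε hε => ?_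
  obtain ⟨δ, hδ, hQδ⟩ := exists_pos_mul_lt (half_pos hε) ‖Q‖
  obtain ⟨y', hy', hyy'⟩ := Metric.mem_closure_iff.mp (mem_closure_iff_clusterPt.mpr hy) δ hδ
  obtain ⟨φ, hφ, hφy'⟩ := hy' ψ hψ (ε / 2) (half_pos hε)
  refine ⟨φ, hφ, ?_⟩
  have hφψ : ‖φ * ψ‖ ≤ 1 :=
    (norm_mul_le _ _).trans (mul_le_one₀ (hM φ hφ) (norm_nonneg _) (hM ψ hψ))
  have hdiff : ‖Q ((φ * ψ) (y - y'))‖ ≤ ε / 2 :=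
    calc ‖Q ((φ * ψ) (y - y'))‖ ≤ ‖Q‖ * ‖(φ * ψ) (y - y')‖ := Q.le_opNorm _
      _ ≤ ‖Q‖ * ‖y - y'‖ := by
          gcongr
          exact ((φ * ψ).le_of_opNorm_le hφψ _).trans_eq (one_mul _)
      _ ≤ ‖Q‖ * δ := by
          gcongr
          exact (dist_eq_norm y y' ▸ hyy').le
      _ ≤ ε / 2 := hQδ.le
  calc ‖Q (φ (ψ y))‖ ≤ ‖Q (φ (ψ y'))‖ + ‖Q ((φ * ψ) (y - y'))‖ := by
        simpa only [map_sub, mul_apply_eq_comp, add_sub_cancel] using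
          norm_add_le (Q (φ (ψ y'))) (Q (φ (ψ y)) - Q (φ (ψ y')))
    _ < ε / 2 + ε / 2 := add_lt_add_of_lt_of_le hφy' hdiff
    _ = ε := add_halves ε

theorem AveragesToKer.of_dense_span (hM : ∀ φ ∈ M, ‖φ‖ ≤ 1) (hQ : ∀ φ ∈ M, Commute Q φ)
    {G : Set X} (hG : ∀ g ∈ G, AveragesToKer M Q g)
    (hdense : Dense (Submodule.span 𝕜 G : Set X)) (y : X) : AveragesToKer M Q y := by
  let T : Submodule 𝕜 X :=
    { carrier := {y | AveragesToKer M Q y}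
      add_mem' := fun hx hy => hx.add hM hQ hy
      zero_mem' := averagesToKer_zero
      smul_mem' := fun c _ hy => hy.smul c }
  have hT : closure (Submodule.span 𝕜 G : Set X) ⊆ T :=
    closure_minimal (Submodule.span_le.mpr hG) (isClosed_setOf_averagesToKer hM)
  exact hT (hdense.closure_eq ▸ mem_univ y)

end Averaging

section UnitaryAveraging

variable {B : Type*} [NormedRing B] [StarRing B] [NormedAlgebra ℂ B] [StarModule ℂ B]

def unitaryAveraging (A : StarSubalgebra ℂ B) : Submonoid (B →L[ℂ] B) where
  carrier := convexHull ℝ (range fun v : unitary A =>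
    ContinuousLinearMap.mulLeftRight ℂ B (v : A) (star ((v : A) : B)))
  mul_mem' hφ hψ := by
    refine convexHull_mono ?_ (convexHull_mul_subset _ _ ⟨_, hφ, _, hψ, rfl⟩)
    rintro _ ⟨_, ⟨v, rfl⟩, _, ⟨w, rfl⟩, rfl⟩
    exact ⟨v * w, by ext; simp [mul_assoc]⟩
  one_mem' := subset_convexHull ℝ _ ⟨1, by ext; simp⟩

variable {A : StarSubalgebra ℂ B} {φ : B →L[ℂ] B}

theorem StarSubalgebra.coe_mem_unitary (v : unitary A) : ((v : A) : B) ∈ unitary B :=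
  Unitary.map_mem A.subtype v.2

theorem image_apply_unitaryAveraging (x : B) :
    (fun φ : B →L[ℂ] B => φ x) '' unitaryAveraging A =
      convexHull ℝ (range fun v : unitary A => ((v : A) : B) * x * star ((v : A) : B)) := by
  have := ((ContinuousLinearMap.apply ℂ B x).toLinearMap.restrictScalars ℝ).image_convexHull
    (range fun v : unitary A => ContinuousLinearMap.mulLeftRight ℂ B (v : A) (star ((v : A) : B)))
  rw [← range_comp] at this
  exact this

theorem norm_le_one_of_mem_unitaryAveraging [CStarRing B] (hφ : φ ∈ unitaryAveraging A) :
    ‖φ‖ ≤ 1 := by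
  refine mem_closedBall_zero_iff.mp (convexHull_min ?_ (convex_closedBall 0 1) hφ)
  rintro _ ⟨v, rfl⟩
  have hv := StarSubalgebra.coe_mem_unitary v
  refine mem_closedBall_zero_iff.mpr
    (ContinuousLinearMap.opNorm_le_bound _ zero_le_one fun x => ?_)
  rw [ContinuousLinearMap.mulLeftRight_apply, CStarRing.norm_mul_mem_unitary _
    (Unitary.star_mem hv), CStarRing.norm_mem_unitary_mul _ hv, one_mul]

theorem norm_apply_le_of_mem_unitaryAveraging [CStarRing B] (hφ : φ ∈ unitaryAveraging A)
    (x : B) : ‖φ x‖ ≤ ‖x‖ :=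
  (φ.le_of_opNorm_le (norm_le_one_of_mem_unitaryAveraging hφ) x).trans_eq (one_mul _)

theorem map_one_of_mem_unitaryAveraging (hφ : φ ∈ unitaryAveraging A) : φ 1 = 1 := by
  refine convexHull_min ?_ ((convex_singleton (1 : B)).linear_preimage
    ((ContinuousLinearMap.apply ℂ B 1).toLinearMap.restrictScalars ℝ)) hφ
  rintro _ ⟨v, rfl⟩
  simp [Unitary.mul_star_self_of_mem (StarSubalgebra.coe_mem_unitary v)]

theorem commute_of_mem_unitaryAveraging {E : B →L[ℂ] B}
    (hE : ∀ c ∈ A, ∀ d ∈ A, ∀ x, E (c * x * d) = c * E x * d)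
    (hφ : φ ∈ unitaryAveraging A) : Commute E φ := by
  have : φ ∈ Subalgebra.centralizer ℝ {E} := by
    refine convexHull_min ?_ (Subalgebra.centralizer ℝ {E}).toSubmodule.convex hφ
    rintro _ ⟨v, rfl⟩ _ rfl
    ext x
    simp [hE _ (v : A).2 _ (star_mem (v : A).2)]
  exact (Subalgebra.mem_centralizer_iff ℝ).mp this E rfl

theorem norm_apply_sub_one_le [CStarRing B] {E : B →L[ℂ] B}
    (hE : ∀ c ∈ A, ∀ d ∈ A, ∀ x, E (c * x * d) = c * E x * d)
    (hφ : φ ∈ unitaryAveraging A) (x : B) :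
    ‖φ x - 1‖ ≤ ‖(1 - E) (φ x)‖ + ‖E x - 1‖ := by
  have h : E (φ x) - 1 = φ (E x - 1) := by
    rw [map_sub, map_one_of_mem_unitaryAveraging hφ, ← mul_apply_eq_comp,
      (commute_of_mem_unitaryAveraging hE hφ).eq, mul_apply_eq_comp]
  calc ‖φ x - 1‖ = ‖(1 - E) (φ x) + (E (φ x) - 1)‖ := by simp
    _ ≤ ‖(1 - E) (φ x)‖ + ‖φ (E x - 1)‖ := h ▸ norm_add_le _ _
    _ ≤ ‖(1 - E) (φ x)‖ + ‖E x - 1‖ :=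
        add_le_add le_rfl (norm_apply_le_of_mem_unitaryAveraging hφ _)

theorem exists_mem_twoSidedIdeal_eq_apply {D : StarSubalgebra ℂ B} (hAD : A ≤ D)
    {J : TwoSidedIdeal D} {x : D} (hx : x ∈ J) (hφ : φ ∈ unitaryAveraging A) :
    ∃ y ∈ J, (y : B) = φ x := by
  have hconv : Convex ℝ (((↑) : D → B) '' J) :=
    J.convex.linear_image (D.subtype.toLinearMap.restrictScalars ℝ)
  have hφx : φ x ∈ convexHull ℝ _ :=
    image_apply_unitaryAveraging (A := A) x ▸ mem_image_of_mem _ hφ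
  refine convexHull_min ?_ hconv hφx
  rintro _ ⟨v, rfl⟩
  let w : D := ⟨(v : A), hAD (v : A).2⟩
  exact ⟨w * x * star w, J.mul_mem_right _ _ (J.mul_mem_left _ _ hx), rfl⟩

end UnitaryAveraging

section CrossedProduct

variable {B : Type*} [NormedRing B] [StarRing B] [NormedAlgebra ℂ B] [StarModule ℂ B]
  {Γ : Type*} [Group Γ] {A : StarSubalgebra ℂ B} {u : Γ →* unitary B}
  {α : Γ → (A ≃⋆ₐ[ℂ] A)} {E : B →L[ℂ] B}

structure IsCrossedProductSetup (A : StarSubalgebra ℂ B) (u : Γ →* unitary B)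
    (α : Γ → (A ≃⋆ₐ[ℂ] A)) (E : B →L[ℂ] B) : Prop where
  coe_apply : ∀ (t : Γ) (a : A), ((α t a : A) : B) = (u t : B) * (a : B) * star (u t : B)
  dense_span : Dense (↑(Submodule.span ℂ {x : B | ∃ a ∈ A, ∃ t : Γ, x = a * (u t : B)}) : Set B)
  expectation_mul_one : ∀ a ∈ A, E (a * (u 1 : B)) = a
  expectation_mul_of_ne_one : ∀ a ∈ A, ∀ t : Γ, t ≠ 1 → E (a * (u t : B)) = 0

theorem conj_mem_of_coe_apply_eq
    (hαu : ∀ (t : Γ) (a : A), ((α t a : A) : B) = (u t : B) * (a : B) * star (u t : B))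
    (t : Γ) {a : B} (ha : a ∈ A) : (u t : B) * a * star (u t : B) ∈ A :=
  hαu t ⟨a, ha⟩ ▸ (α t ⟨a, ha⟩).2

theorem continuous_of_coe_apply_eq
    (hαu : ∀ (t : Γ) (a : A), ((α t a : A) : B) = (u t : B) * (a : B) * star (u t : B))
    (t : Γ) : Continuous (α t) := by
  refine continuous_induced_rng.mpr ?_
  simp only [Function.comp_def, hαu]
  fun_prop

theorem image_apply_mul_unitary
    (hαu : ∀ (t : Γ) (a : A), ((α t a : A) : B) = (u t : B) * (a : B) * star (u t : B))
    (a : B) (t : Γ) :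
    (fun φ : B →L[ℂ] B => φ (a * u t)) '' unitaryAveraging A =
      (· * (u t : B)) '' convexHull ℝ
        {y | ∃ v : A, v ∈ unitary A ∧ y = v * a * star (α t v : B)} := by
  rw [image_apply_unitaryAveraging]
  refine Eq.trans ?_ ((LinearMap.mulRight ℝ (u t : B)).image_convexHull _).symm
  have hv (v : A) : (v : B) * a * star (α t v : B) * u t = v * (a * u t) * star (v : B) := by
    rw [hαu]
    simp only [star_mul, star_star, mul_assoc, Unitary.coe_star_mul_self, mul_one]
  congr 1
  ext y
  simp only [mem_range, mem_image, mem_ofPred_eq, LinearMap.mulRight_apply]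
  constructor
  · rintro ⟨v, rfl⟩
    exact ⟨_, ⟨v, v.2, rfl⟩, hv v⟩
  · rintro ⟨_, ⟨v, hv', rfl⟩, rfl⟩
    exact ⟨⟨v, hv'⟩, (hv v).symm⟩

theorem exists_apply_mul_unitary_eq
    (hαu : ∀ (t : Γ) (a : A), ((α t a : A) : B) = (u t : B) * (a : B) * star (u t : B))
    {φ : B →L[ℂ] B} (hφ : φ ∈ unitaryAveraging A) {a : B} (ha : a ∈ A) (t : Γ) :
    ∃ c ∈ A, φ (a * u t) = c * u t := by
  have hA : Convex ℝ (A : Set B) := (A.toSubalgebra.restrictScalars ℝ).toSubmodule.convex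
  obtain ⟨c, hc, hφc⟩ := image_apply_mul_unitary hαu a t ▸ mem_image_of_mem _ hφ
  refine ⟨c, convexHull_min ?_ hA hc, hφc.symm⟩
  rintro _ ⟨v, -, rfl⟩
  exact mul_mem (mul_mem v.2 ha) (star_mem (α t v).2)

theorem exists_norm_apply_mul_unitary_lt [CStarRing B] [CompleteSpace B]
    (hαu : ∀ (t : Γ) (a : A), ((α t a : A) : B) = (u t : B) * (a : B) * star (u t : B))
    {t : Γ} {a : B} (h0 : (0 : B) ∈ relC A (α t) a) {ε : ℝ} (hε : 0 < ε) :
    ∃ φ ∈ unitaryAveraging A, ‖φ (a * u t)‖ < ε := by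
  obtain ⟨c, hc, hdist⟩ := Metric.mem_closure_iff.mp h0 ε hε
  obtain ⟨φ, hφ, hφc⟩ := image_apply_mul_unitary hαu a t ▸ mem_image_of_mem (· * (u t : B)) hc
  refine ⟨φ, hφ, ?_⟩
  rwa [show φ (a * u t) = c * u t from hφc, CStarRing.norm_mul_coe_unitary, ← dist_zero_left]

namespace IsCrossedProductSetup

section

variable (h : IsCrossedProductSetup A u α E)
include h

open Classical in
theorem expectation_mul_unitary {a : B} (ha : a ∈ A) (t : Γ) :
    E (a * u t) = if t = 1 then a else 0 := by
  split_ifs with ht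
  · exact ht ▸ h.expectation_mul_one a ha
  · exact h.expectation_mul_of_ne_one a ha t ht

theorem expectation_mul_mul : ∀ c ∈ A, ∀ d ∈ A, ∀ x, E (c * x * d) = c * E x * d := by
  intro c hc d hd x
  suffices E.comp (ContinuousLinearMap.mulLeftRight ℂ B c d) =
      (ContinuousLinearMap.mulLeftRight ℂ B c d).comp E from
    congr($this x)
  refine ContinuousLinearMap.ext_on h.dense_span ?_
  rintro _ ⟨a, ha, t, rfl⟩
  have hmem : c * a * ((u t : B) * d * star (u t : B)) ∈ A :=
    mul_mem (mul_mem hc ha) (conj_mem_of_coe_apply_eq h.coe_apply t hd)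
  have hrw : c * (a * u t) * d = c * a * ((u t : B) * d * star (u t : B)) * u t := by
    simp [mul_assoc]
  simp only [ContinuousLinearMap.comp_apply, ContinuousLinearMap.mulLeftRight_apply]
  rw [hrw, h.expectation_mul_unitary hmem, h.expectation_mul_unitary ha]
  split_ifs with ht <;> simp [ht]

theorem expectation_conj_unitary (s : Γ) (x : B) :
    E ((u s : B) * x * star (u s : B)) = (u s : B) * E x * star (u s : B) := by
  suffices E.comp (ContinuousLinearMap.mulLeftRight ℂ B (u s) (star (u s : B))) =
      (ContinuousLinearMap.mulLeftRight ℂ B (u s) (star (u s : B))).comp E from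
    congr($this x)
  refine ContinuousLinearMap.ext_on h.dense_span ?_
  rintro _ ⟨a, ha, t, rfl⟩
  have hrw : (u s : B) * (a * u t) * star (u s : B) =
      (u s : B) * a * star (u s : B) * u (s * t * s⁻¹) := by
    simp only [map_mul, map_inv, ← Unitary.star_eq_inv, Submonoid.coe_mul, Unitary.coe_star,
      mul_assoc]
    rw [← mul_assoc (star (u s : B)), Unitary.coe_star_mul_self, one_mul]
  simp only [ContinuousLinearMap.comp_apply, ContinuousLinearMap.mulLeftRight_apply]
  rw [hrw, h.expectation_mul_unitary (conj_mem_of_coe_apply_eq h.coe_apply s ha),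
    h.expectation_mul_unitary ha]
  split_ifs with hs ht ht <;> simp_all [conj_eq_one_iff]

theorem averagesToKer_one_sub_expectation [CStarRing B] [CompleteSpace B]
    (hSAveP : ∀ t : Γ, t ≠ 1 → ∀ b ∈ A, (0 : B) ∈ relC A (⇑(α t)) b) (y : B) :
    AveragesToKer (unitaryAveraging A) (1 - E) y := by
  have hM : ∀ φ ∈ unitaryAveraging A, ‖φ‖ ≤ 1 := fun _ hφ =>
    norm_le_one_of_mem_unitaryAveraging hφ
  have hQ : ∀ φ ∈ unitaryAveraging A, Commute (1 - E) φ := fun φ hφ =>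
    (Commute.one_left φ).sub_left (commute_of_mem_unitaryAveraging h.expectation_mul_mul hφ)
  refine AveragesToKer.of_dense_span hM hQ ?_ h.dense_span y
  rintro _ ⟨a, ha, t, rfl⟩ ψ hψ ε hε
  obtain ⟨c, hc, hψc⟩ := exists_apply_mul_unitary_eq h.coe_apply hψ ha t
  rw [hψc]
  by_cases ht : t = 1
  · subst ht
    refine ⟨1, (unitaryAveraging A).one_mem, ?_⟩
    rwa [one_apply_eq_self, sub_apply, one_apply_eq_self, h.expectation_mul_one c hc, map_one,
      OneMemClass.coe_one, mul_one, sub_self, norm_zero]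
  · obtain ⟨φ, hφ, hφc⟩ := exists_norm_apply_mul_unitary_lt h.coe_apply (hSAveP t ht c hc) hε
    obtain ⟨c', hc', hφc'⟩ := exists_apply_mul_unitary_eq h.coe_apply hφ hc t
    refine ⟨φ, hφ, ?_⟩
    rwa [sub_apply, one_apply_eq_self, hφc', h.expectation_mul_of_ne_one c' hc' t ht, sub_zero,
      ← hφc']

end

variable {D : StarSubalgebra ℂ B}

def expectationIdeal (h : IsCrossedProductSetup A u α E) (hAD : A ≤ D) (J : TwoSidedIdeal D) :
    TwoSidedIdeal A :=
  .mk' {a | ∃ x ∈ J, E x = a}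
    ⟨0, J.zero_mem, by simp⟩
    (fun ⟨x, hx, hxa⟩ ⟨y, hy, hya⟩ => ⟨x + y, J.add_mem hx hy, by simp [hxa, hya]⟩)
    (fun ⟨x, hx, hxa⟩ => ⟨-x, J.neg_mem hx, by simp [hxa]⟩)
    (fun {c _} ⟨x, hx, hxa⟩ => ⟨⟨c, hAD c.2⟩ * x, J.mul_mem_left _ _ hx,
      by simpa [hxa] using h.expectation_mul_mul c c.2 1 (one_mem A) x⟩)
    (fun {_ d} ⟨x, hx, hxa⟩ => ⟨x * ⟨d, hAD d.2⟩, J.mul_mem_right _ _ hx,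
      by simpa [hxa] using h.expectation_mul_mul 1 (one_mem A) d d.2 x⟩)

section

variable {h : IsCrossedProductSetup A u α E} {hAD : A ≤ D} {J : TwoSidedIdeal D}

theorem mem_expectationIdeal {a : A} : a ∈ h.expectationIdeal hAD J ↔ ∃ x ∈ J, E x = a :=
  TwoSidedIdeal.mem_mk' _ _ _ _ _ _ a

theorem expectationIdeal_ne_bot (hEmem : ∀ x : B, E x ∈ A)
    (hEfaithful : ∀ x : B, E (star x * x) = 0 → x = 0) (hJ : J ≠ ⊥) :
    h.expectationIdeal hAD J ≠ ⊥ := by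
  obtain ⟨x, hxJ, hx⟩ : ∃ x ∈ J, x ≠ 0 := by
    by_contra! hJ0
    exact hJ (eq_bot_iff.mpr fun x hx => (TwoSidedIdeal.mem_bot _).mpr (hJ0 x hx))
  intro hK
  have hmem : (⟨E (star x * x : D), hEmem _⟩ : A) ∈ h.expectationIdeal hAD J :=
    mem_expectationIdeal.mpr ⟨star x * x, J.mul_mem_left _ _ hxJ, rfl⟩
  rw [hK, TwoSidedIdeal.mem_bot] at hmem
  exact hx (Subtype.ext (hEfaithful _ congr(Subtype.val $hmem)))

theorem apply_mem_expectationIdeal {s : Γ} (hs : (u s : B) ∈ D) {a : A}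
    (ha : a ∈ h.expectationIdeal hAD J) : α s a ∈ h.expectationIdeal hAD J := by
  obtain ⟨x, hx, hxa⟩ := mem_expectationIdeal.mp ha
  let w : D := ⟨u s, hs⟩
  exact mem_expectationIdeal.mpr ⟨w * x * star w, J.mul_mem_right _ _ (J.mul_mem_left _ _ hx),
    by simp [w, h.expectation_conj_unitary, hxa, h.coe_apply]⟩

end

theorem exists_mem_norm_expectation_sub_one_lt
    (h : IsCrossedProductSetup A u α E) (hEmem : ∀ x : B, E x ∈ A)
    (hEfaithful : ∀ x : B, E (star x * x) = 0 → x = 0)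
    {Λ : Subgroup Γ} (hmin : ∀ I : TwoSidedIdeal A, IsClosed (I : Set A) →
      (∀ s ∈ Λ, ∀ x : A, x ∈ I → α s x ∈ I) → I = ⊥ ∨ I = ⊤)
    (hAD : A ≤ D) (hUD : ∀ t ∈ Λ, (u t : B) ∈ D) {J : TwoSidedIdeal D} (hJ : J ≠ ⊥)
    {ε : ℝ} (hε : 0 < ε) :
    ∃ x ∈ J, ‖E x - 1‖ < ε := by
  set K := h.expectationIdeal hAD J
  have hinv : ∀ s ∈ Λ, ∀ a : A, a ∈ K.topologicalClosure → α s a ∈ K.topologicalClosure := by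
    intro s hs a ha
    rw [← SetLike.mem_coe, TwoSidedIdeal.coe_topologicalClosure] at ha ⊢
    exact map_mem_closure (continuous_of_coe_apply_eq h.coe_apply s) ha
      fun b hb => apply_mem_expectationIdeal (hUD s hs) hb
  have htop : K.topologicalClosure = ⊤ :=
    (hmin _ K.isClosed_topologicalClosure hinv).resolve_left fun hbot =>
      expectationIdeal_ne_bot hEmem hEfaithful hJ (eq_bot_iff.mpr (hbot ▸ K.le_topologicalClosure))
  have h1 : (1 : A) ∈ closure (K : Set A) := by
    rw [← TwoSidedIdeal.coe_topologicalClosure, htop]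
    trivial
  obtain ⟨a, ha, hdist⟩ := Metric.mem_closure_iff.mp h1 ε hε
  obtain ⟨x, hx, hxa⟩ := mem_expectationIdeal.mp ha
  refine ⟨x, hx, ?_⟩
  rwa [hxa, ← dist_eq_norm, dist_comm]

end IsCrossedProductSetup

end CrossedProduct

theorem intermediate_algebras_simple_general
    {B : Type*} [NormedRing B] [StarRing B] [CStarRing B] [NormedAlgebra ℂ B]
    [CompleteSpace B] [StarModule ℂ B]
    {Γ : Type*} [Group Γ]
    (A : StarSubalgebra ℂ B)
    (u : Γ →* unitary B)
    (α : Γ → (↥A ≃⋆ₐ[ℂ] ↥A))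
    (hαu : ∀ (t : Γ) (a : ↥A), ((α t a : ↥A) : B) = (u t : B) * (a : B) * star (u t : B))
    (hdense : Dense (↑(Submodule.span ℂ
      {x : B | ∃ a ∈ A, ∃ t : Γ, x = a * (u t : B)}) : Set B))
    (E : B →L[ℂ] B) (hEmem : ∀ x : B, E x ∈ A)
    (hEe : ∀ a ∈ A, E (a * (u 1 : B)) = a)
    (hEt : ∀ a ∈ A, ∀ t : Γ, t ≠ 1 → E (a * (u t : B)) = 0)
    (hEfaithful : ∀ x : B, E (star x * x) = 0 → x = 0)
    (hSAveP : ∀ t : Γ, t ≠ 1 → ∀ b ∈ A, (0 : B) ∈ relC A (⇑(α t)) b)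
    (Λ : Subgroup Γ)
    (hmin : ∀ I : TwoSidedIdeal ↥A, IsClosed (I : Set ↥A) →
      (∀ s ∈ Λ, ∀ x : ↥A, x ∈ I → α s x ∈ I) → I = ⊥ ∨ I = ⊤)
    (D : StarSubalgebra ℂ B) (hD : IsClosed (D : Set B))
    (hAD : A ≤ D) (hUD : ∀ t ∈ Λ, (u t : B) ∈ D) :
    ∀ J : TwoSidedIdeal ↥D, IsClosed (J : Set ↥D) → J = ⊥ ∨ J = ⊤ := by
  intro J _
  refine or_iff_not_imp_left.mpr fun hJ => ?_
  have h : IsCrossedProductSetup A u α E := ⟨hαu, hdense, hEe, hEt⟩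
  obtain ⟨z, hzJ, hz⟩ :=
    h.exists_mem_norm_expectation_sub_one_lt hEmem hEfaithful hmin hAD hUD hJ one_half_pos
  obtain ⟨φ, hφ, hφz⟩ :=
    h.averagesToKer_one_sub_expectation hSAveP z 1 (one_mem _) _ one_half_pos
  obtain ⟨y, hyJ, hy⟩ := exists_mem_twoSidedIdeal_eq_apply hAD hzJ hφ
  have : CompleteSpace D := hD.completeSpace_coe
  refine J.eq_top_of_norm_one_sub_lt_one hyJ ?_
  calc ‖1 - y‖ = ‖φ z - 1‖ := by rw [norm_sub_rev, ← hy]; rfl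
    _ ≤ ‖(1 - E) (φ z)‖ + ‖E z - 1‖ := norm_apply_sub_one_le h.expectation_mul_mul hφ z
    _ < 1 / 2 + 1 / 2 := add_lt_add (by simpa using hφz) hz
    _ = 1 := add_halves 1

/-- Theorem 3.4 (i): in the abstract reduced crossed product setup for an action
`α : Γ → Aut(A)` with (SAveP) and faithful conditional expectation `E`, if `Λ ≤ Γ` is a
subgroup whose restricted action on `A` is minimal, then every norm-closed *-subalgebra
`D` of `B` containing `A` and the unitaries `u_t`, `t ∈ Λ`, is simple; hence the
inclusion `A ⋊_r Λ ⊆ A ⋊_r Γ` is C*-irreducible. -/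
theorem intermediate_algebras_simple
    {B : Type*} [NormedRing B] [StarRing B] [CStarRing B] [NormedAlgebra ℂ B]
    [CompleteSpace B] [StarModule ℂ B]
    {Γ : Type*} [Group Γ]
    (A : StarSubalgebra ℂ B) (hA : IsClosed (A : Set B))
    (u : Γ →* unitary B)
    (α : Γ → (↥A ≃⋆ₐ[ℂ] ↥A))
    (hαu : ∀ (t : Γ) (a : ↥A), ((α t a : ↥A) : B) = (u t : B) * (a : B) * star (u t : B))
    (hdense : Dense (↑(Submodule.span ℂ
      {x : B | ∃ a ∈ A, ∃ t : Γ, x = a * (u t : B)}) : Set B))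
    (E : B →L[ℂ] B) (hEmem : ∀ x : B, E x ∈ A) (hEnorm : ‖E‖ ≤ 1)
    (hEe : ∀ a ∈ A, E (a * (u 1 : B)) = a)
    (hEt : ∀ a ∈ A, ∀ t : Γ, t ≠ 1 → E (a * (u t : B)) = 0)
    (hEfaithful : ∀ x : B, E (star x * x) = 0 → x = 0)
    (hSAveP : ∀ t : Γ, t ≠ 1 → ∀ b ∈ A, (0 : B) ∈ relC A (⇑(α t)) b)
    (Λ : Subgroup Γ)
    (hmin : ∀ I : TwoSidedIdeal ↥A, IsClosed (I : Set ↥A) →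
      (∀ s ∈ Λ, ∀ x : ↥A, x ∈ I → α s x ∈ I) → I = ⊥ ∨ I = ⊤)
    (D : StarSubalgebra ℂ B) (hD : IsClosed (D : Set B))
    (hAD : A ≤ D) (hUD : ∀ t ∈ Λ, (u t : B) ∈ D) :
    ∀ J : TwoSidedIdeal ↥D, IsClosed (J : Set ↥D) → J = ⊥ ∨ J = ⊤ :=
  intermediate_algebras_simple_general A u α hαu hdense E hEmem hEe hEt hEfaithful hSAveP Λ hmin D
    hD hAD hUD
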